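/- Let λ = (λ₁, ..., λ_t) be a partition of n with t ≥ 3 parts and smallest part λ_t ≥ 4. Then there do not exist commuting nilpotent n × n matrices A and B with Jordan type of B equal to λ and Jordan type of A equal to (3, 1^{n−3}). -/

import Mathlib

/-!
The range `W` of `A` is a `B`-invariant plane, and `B` is nilpotent on it, so `B² W = 0`.
Since every Jordan block of `B` has size at least `4`, counting ranks of `B²` and `B⁴` gives
`ker B² ⊆ im B²`. Hence every `A v` is some `B² u`, and `A² v = B² (A u) = 0` because `A u ∈ W`;
this contradicts `rank A² = 1`.
-/

open Matrix

/-- `l` is a partition of `n`: nonincreasing list of positive integers summing to `n`. -/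
def IsPartition (n : ℕ) (l : List ℕ) : Prop :=
  l.Pairwise (· ≥ ·) ∧ (∀ x ∈ l, 0 < x) ∧ l.sum = n

/-- A partition is almost rectangular if any two parts differ by at most 1. -/
def AlmostRect (l : List ℕ) : Prop := ∀ a ∈ l, ∀ b ∈ l, a ≤ b + 1

/-- The unique almost rectangular partition of `n` with `t` parts:
`⌈n/t⌉` repeated `r` times followed by `⌊n/t⌋` repeated `t - r` times, `r = n - t⌊n/t⌋`. -/
def ARP (n t : ℕ) : List ℕ :=
  List.replicate (n - t * (n / t)) (n / t + 1) ++
    List.replicate (t - (n - t * (n / t))) (n / t)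

/-- A nilpotent matrix `A` has Jordan type `l` iff `l` is a partition of `n` and the rank
of every power `A ^ i` equals `∑_p max(p - i, 0)` over the parts `p` of `l`; this rank
condition characterizes the Jordan canonical form of a nilpotent matrix. -/
def HasJordanType {K : Type*} [Field K] {n : ℕ} (A : Matrix (Fin n) (Fin n) K)
    (l : List ℕ) : Prop :=
  IsPartition n l ∧ ∀ i : ℕ, (A ^ i).rank = (l.map fun p => p - i).sum

/-- The `m × m` nilpotent upper triangular Jordan block. -/
def Jblock (K : Type*) [Field K] (m : ℕ) : Matrix (Fin m) (Fin m) K :=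
  Matrix.of fun i j => if (i : ℕ) + 1 = (j : ℕ) then 1 else 0

/-- `DEq K n lam mu` expresses `D(lam) = mu`: some nilpotent matrix of Jordan type `mu`
commutes with a nilpotent matrix of Jordan type `lam`, and `mu` dominates every Jordan
type occurring in the nilpotent commutator of a matrix of type `lam`. -/
def DEq (K : Type*) [Field K] (n : ℕ) (lam mu : List ℕ) : Prop :=
  (∃ A B : Matrix (Fin n) (Fin n) K,
      A * B = B * A ∧ HasJordanType B lam ∧ HasJordanType A mu) ∧
  ∀ nu : List ℕ,
    (∃ A B : Matrix (Fin n) (Fin n) K,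
      A * B = B * A ∧ HasJordanType B lam ∧ HasJordanType A nu) →
    ∀ k : ℕ, (nu.take k).sum ≤ (mu.take k).sum

/-- A rectangular matrix that is upper triangular and constant along diagonals. -/
def UTToeplitz {K : Type*} [Field K] {p r : ℕ} (M : Matrix (Fin p) (Fin r) K) : Prop :=
  (∀ (i : Fin p) (j : Fin r), (j : ℕ) < (i : ℕ) → M i j = 0) ∧
  (∀ (i i' : Fin p) (j j' : Fin r),
    (j : ℕ) + (i' : ℕ) = (j' : ℕ) + (i : ℕ) → M i j = M i' j')

open Module LinearMap

theorem List.sum_map_tsub_add_mul_length {k : ℕ} {l : List ℕ} (h : ∀ x ∈ l, k ≤ x) :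
    (l.map (· - k)).sum + k * l.length = l.sum := by
  induction l with
  | nil => simp
  | cons a l ih =>
    have ha := h a List.mem_cons_self
    have hl := ih fun x hx => h x (List.mem_cons_of_mem _ hx)
    simp only [List.map_cons, List.sum_cons, List.length_cons, Nat.mul_succ]
    omega

section LinearAlgebra

variable {K V : Type*} [Field K] [AddCommGroup V] [Module K V] [FiniteDimensional K V]

theorem IsNilpotent.pow_finrank_eq_zero {f : End K V} (hf : IsNilpotent f) :
    f ^ finrank K V = 0 := by
  simpa only [hf.charpoly_eq_X_pow_finrank, map_pow, Polynomial.aeval_X] using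
    f.aeval_self_charpoly

theorem Module.End.pow_finrank_apply_eq_zero_of_mapsTo {f : End K V} (hf : IsNilpotent f)
    {W : Submodule K V} (hW : Set.MapsTo f W W) {x : V} (hx : x ∈ W) :
    (f ^ finrank K W) x = 0 := by
  have hres := LinearMap.congr_fun
    ((Module.End.isNilpotent.restrict hW hf).pow_finrank_eq_zero) ⟨x, hx⟩
  rw [Module.End.pow_restrict (f' := f) _ hW] at hres
  exact congrArg Subtype.val hres

theorem LinearMap.finrank_range_eq_finrank_range_sq_add_finrank_ker_inf_range (f : End K V) :
    finrank K (range f) = finrank K (range (f ^ 2)) + finrank K ↥(ker f ⊓ range f) := by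
  have key := finrank_range_add_finrank_ker (f.domRestrict (range f))
  rwa [range_domRestrict, ← range_comp, ker_domRestrict, ← Submodule.finrank_map_subtype_eq,
    Submodule.map_comap_subtype, inf_comm, ← Module.End.mul_eq_comp, ← sq, eq_comm] at key

theorem LinearMap.ker_le_range_of_finrank_range_eq {f : End K V}
    (h : finrank K (range f) = finrank K (range (f ^ 2)) + finrank K (ker f)) :
    ker f ≤ range f := by
  have hinf : ker f ⊓ range f = ker f := by
    refine Submodule.eq_of_le_of_finrank_eq inf_le_left ?_
    have := f.finrank_range_eq_finrank_range_sq_add_finrank_ker_inf_range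
    omega
  exact inf_eq_left.mp hinf

theorem sq_eq_zero_of_commute_of_ker_le_range {a b : End K V} (hab : Commute a b)
    (hb : IsNilpotent b)
    (hker : ker (b ^ finrank K (range a)) ≤ range (b ^ finrank K (range a))) :
    a ^ 2 = 0 := by
  have hinv : Set.MapsTo b (range a) (range a) := by
    rintro _ ⟨v, rfl⟩
    exact ⟨b v, LinearMap.congr_fun hab v⟩
  ext v
  obtain ⟨u, hu⟩ := hker (Module.End.pow_finrank_apply_eq_zero_of_mapsTo hb hinv ⟨v, rfl⟩)
  have hau : (b ^ finrank K (range a)) (a u) = 0 :=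
    Module.End.pow_finrank_apply_eq_zero_of_mapsTo hb hinv ⟨u, rfl⟩
  rw [sq, Module.End.mul_apply, ← hu, ← Module.End.mul_apply,
    (hab.pow_right _).eq, Module.End.mul_apply, hau, LinearMap.zero_apply]

end LinearAlgebra

theorem Matrix.rank_eq_finrank_range_toLinAlgEquiv' {m R : Type*} [Fintype m] [DecidableEq m]
    [CommRing R] (A : Matrix m m R) : A.rank = finrank R (range (toLinAlgEquiv' A)) :=
  rfl

namespace HasJordanType

variable {K : Type*} [Field K] {n : ℕ} {B : Matrix (Fin n) (Fin n) K} {lam : List ℕ}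

theorem rank_pow_add_mul_length (hB : HasJordanType B lam) {k : ℕ} (hk : ∀ p ∈ lam, k ≤ p) :
    (B ^ k).rank + k * lam.length = n := by
  rw [hB.2 k, List.sum_map_tsub_add_mul_length hk, hB.1.2.2]

theorem isNilpotent (hB : HasJordanType B lam) : IsNilpotent B := by
  have hrank : (B ^ n).rank = 0 := by
    rw [hB.2 n]
    refine List.sum_eq_zero fun x hx => ?_
    obtain ⟨p, hp, rfl⟩ := List.mem_map.mp hx
    have := hB.1.2.2 ▸ List.le_sum_of_mem hp
    omega
  rw [rank_eq_finrank_range_toLinAlgEquiv', Submodule.finrank_eq_zero, range_eq_bot] at hrank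
  exact ⟨n, toLinAlgEquiv'.injective (by rw [hrank, map_zero])⟩

theorem ker_pow_le_range_pow (hB : HasJordanType B lam) {k : ℕ} (hk : ∀ p ∈ lam, 2 * k ≤ p) :
    ker (toLinAlgEquiv' B ^ k) ≤ range (toLinAlgEquiv' B ^ k) := by
  apply ker_le_range_of_finrank_range_eq
  have hrank := finrank_range_add_finrank_ker (toLinAlgEquiv' (B ^ k))
  have hk' := hB.rank_pow_add_mul_length fun p hp =>
    (Nat.le_mul_of_pos_left k two_pos).trans (hk p hp)
  have h2k := hB.rank_pow_add_mul_length hk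
  rw [Nat.mul_assoc] at h2k
  rw [← rank_eq_finrank_range_toLinAlgEquiv', finrank_fin_fun] at hrank
  rw [← map_pow, ← map_pow, ← pow_mul', ← rank_eq_finrank_range_toLinAlgEquiv',
    ← rank_eq_finrank_range_toLinAlgEquiv']
  omega

end HasJordanType

theorem stmt9_general {K : Type*} [Field K] {n : ℕ}
    (lam : List ℕ) (hlam : IsPartition n lam) (hne : lam ≠ [])
    (hmin : 4 ≤ lam.getLast hne) :
    ¬ ∃ A B : Matrix (Fin n) (Fin n) K, A * B = B * A ∧ HasJordanType B lam ∧
        HasJordanType A (3 :: List.replicate (n - 3) 1) := by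
  rintro ⟨A, B, hAB, hB, hA⟩
  have hparts : ∀ p ∈ lam, 2 * 2 ≤ p := fun p hp => hmin.trans (hlam.1.rel_getLast hp)
  have hrank : finrank K (range (toLinAlgEquiv' A)) = 2 := by
    simpa [rank_eq_finrank_range_toLinAlgEquiv'] using hA.2 1
  have hcomm : Commute A B := hAB
  have hsq : A ^ 2 = 0 := by
    refine toLinAlgEquiv'.injective ?_
    rw [map_pow, map_zero]
    refine sq_eq_zero_of_commute_of_ker_le_range (hcomm.map _)
      (hB.isNilpotent.map _) ?_
    rw [hrank]
    exact hB.ker_pow_le_range_pow hparts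
  simpa [hsq] using hA.2 2

/-- If `λ` has at least 3 parts, all of size at least 4, then no nilpotent matrix of
type `λ` commutes with a nilpotent matrix of type `(3, 1^{n-3})`. -/
theorem stmt9 {K : Type*} [Field K] [IsAlgClosed K] [CharZero K] {n : ℕ}
    (lam : List ℕ) (hlam : IsPartition n lam) (hne : lam ≠ [])
    (ht : 3 ≤ lam.length) (hmin : 4 ≤ lam.getLast hne) :
    ¬ ∃ A B : Matrix (Fin n) (Fin n) K, A * B = B * A ∧ HasJordanType B lam ∧
        HasJordanType A (3 :: List.replicate (n - 3) 1) :=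
  stmt9_general lam hlam hne hmin
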